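/- Let (R_{α,n}) be an A_r Q-system solution. For m ∈ {0,1,…,r+1} and n ∈ ℤ, let D_m(n) be the determinant of the (r+1)×(r+1) matrix whose rows are indexed by i = 1,…,r+1, whose columns are indexed by the elements j of {1,…,r+2}\{r+2−m} taken in increasing order, and whose (i,j) entry is R_{1, n+i+j−2}. Then: (a) for each m, D_m(n) is independent of n; (b) D_0(n) = D_{r+1}(n) = 1 for all n; and (c) for all n ∈ ℤ, Σ_{m=0}^{r+1} (−1)^m·D_{r+1−m}(0)·R_{1, n+m} = 0. -/

import Mathlib

/-!
Write `a = R₁` and `H_k(n) = (a (n + i + j))_{i,j<k}`. The Desnanot–Jacobi identity for Hankel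
matrices is exactly the Q-system recursion, so `det H_α(n) = R_{α,n+α-1}`; in particular
`det H_{r+1} ≡ 1` and `det H_{r+2} ≡ 0`. Up to sign, the `D_m(n)` form the last column of
`adj H_{r+2}(n)`. As `H_{r+2}(n)` is singular, this column is killed by the rows `1, …, r+1` of
`H_{r+2}(n)`, which are the rows `0, …, r` of `H_{r+2}(n+1)` and hence also kill the last column
of `adj H_{r+2}(n+1)`. These rows contain the invertible block `H_{r+1}(n+2)`, so their kernel is
a line, and both columns start with `±det H_{r+1} = ±1`: the column does not depend on `n`.
Finally, row `0` of `H_{r+2}(n) * adj H_{r+2}(n) = det H_{r+2}(n) • 1` is the recurrence (c).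
-/

open Matrix

noncomputable def Fin.interiorSumEndpointsEquiv (k : ℕ) : Fin k ⊕ Fin 2 ≃ Fin (k + 2) :=
  Equiv.ofBijective (Sum.elim (fun i => i.castSucc.succ) ![0, Fin.last (k + 1)]) <| by
    rw [Fintype.bijective_iff_injective_and_card]
    refine ⟨?_, by simp⟩
    rintro (i | i) (j | j) h
    · simpa [Fin.ext_iff] using h
    all_goals (try fin_cases i) <;> (try fin_cases j) <;> simp_all [Fin.ext_iff] <;> omega

namespace Matrix

variable {R : Type*} [CommRing R]

theorem det_submatrix_mul_det_submatrix_swap {m n : Type*} [Fintype m] [DecidableEq m]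
    [Fintype n] [DecidableEq n] (X Y : Matrix n n R) (e f : m ≃ n) :
    (X.submatrix e f).det * (Y.submatrix f e).det = X.det * Y.det := by
  have hX : X.submatrix e f = (X.submatrix e e).submatrix id (f.trans e.symm) := by
    ext; simp
  have hY : Y.submatrix f e = (Y.submatrix e e).submatrix (f.trans e.symm) id := by
    ext; simp
  rw [hX, hY, det_permute', det_permute, det_submatrix_equiv_self, det_submatrix_equiv_self,
    mul_mul_mul_comm, ← Int.cast_mul, ← Units.val_mul, Int.units_mul_self, Units.val_one,
    Int.cast_one, one_mul]

section Blocks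

variable {ι : Type*} [Fintype ι] [DecidableEq ι]

theorem det_submatrix_sumMap_const (N : Matrix (ι ⊕ Fin 2) (ι ⊕ Fin 2) R)
    [Invertible N.toBlocks₁₁] (p q : Fin 2) :
    (N.submatrix (Sum.map id fun _ : Fin 1 => p) (Sum.map id fun _ : Fin 1 => q)).det =
      N.toBlocks₁₁.det *
        (N.toBlocks₂₂ - N.toBlocks₂₁ * ⅟N.toBlocks₁₁ * N.toBlocks₁₂) p q := by
  set B := N.submatrix (Sum.map id fun _ : Fin 1 => p) (Sum.map id fun _ : Fin 1 => q)
  let : Invertible B.toBlocks₁₁ := ‹Invertible N.toBlocks₁₁›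
  rw [← fromBlocks_toBlocks B, det_fromBlocks₁₁, det_fin_one]
  rfl

/-- Both sides are `det N₁₁ ^ 2` times the determinant of the `2 × 2` Schur complement of `N₁₁`. -/
theorem desnanot_jacobi_toBlocks (N : Matrix (ι ⊕ Fin 2) (ι ⊕ Fin 2) R)
    [Invertible N.toBlocks₁₁] :
    let B : Fin 2 → Fin 2 → Matrix (ι ⊕ Fin 1) (ι ⊕ Fin 1) R := fun p q =>
      N.submatrix (Sum.map id fun _ => p) (Sum.map id fun _ => q)
    N.det * N.toBlocks₁₁.det = (B 0 0).det * (B 1 1).det - (B 0 1).det * (B 1 0).det := by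
  intro B
  have hN : N.det = N.toBlocks₁₁.det *
      (N.toBlocks₂₂ - N.toBlocks₂₁ * ⅟N.toBlocks₁₁ * N.toBlocks₁₂).det := by
    conv_lhs => rw [← fromBlocks_toBlocks N]
    exact det_fromBlocks₁₁ _ _ _ _
  simp only [B, det_submatrix_sumMap_const, hN, det_fin_two]
  ring

end Blocks

theorem desnanot_jacobi {k : ℕ} (M : Matrix (Fin (k + 2)) (Fin (k + 2)) R)
    (h : IsUnit ((M.submatrix Fin.succ Fin.succ).submatrix Fin.castSucc Fin.castSucc).det) :
    M.det * ((M.submatrix Fin.succ Fin.succ).submatrix Fin.castSucc Fin.castSucc).det =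
      (M.submatrix Fin.castSucc Fin.castSucc).det * (M.submatrix Fin.succ Fin.succ).det -
        (M.submatrix Fin.castSucc Fin.succ).det * (M.submatrix Fin.succ Fin.castSucc).det := by
  set e := Fin.interiorSumEndpointsEquiv k
  set N := M.submatrix e e
  let : Invertible N.toBlocks₁₁ := N.toBlocks₁₁.invertibleOfIsUnitDet h
  let e₀ : Fin k ⊕ Fin 1 ≃ Fin (k + 1) :=
    (Equiv.sumComm _ _).trans (finSumFinEquiv.trans (finCongr (Nat.add_comm 1 k)))
  let e₁ : Fin k ⊕ Fin 1 ≃ Fin (k + 1) := finSumFinEquiv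
  have h₀ : e ∘ Sum.map id (fun _ => 0) = Fin.castSucc ∘ e₀ := by
    funext x; rcases x with j | i <;> ext <;> simp [e, e₀, Fin.interiorSumEndpointsEquiv]
  have h₁ : e ∘ Sum.map id (fun _ => 1) = Fin.succ ∘ e₁ := by
    funext x; rcases x with j | i <;> ext <;> simp [e, e₁, Fin.interiorSumEndpointsEquiv]
  have := desnanot_jacobi_toBlocks N
  simp only [N, submatrix_submatrix, h₀, h₁] at this
  rwa [← submatrix_submatrix, ← submatrix_submatrix, ← submatrix_submatrix,
    ← submatrix_submatrix, det_submatrix_equiv_self, det_submatrix_equiv_self,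
    det_submatrix_mul_det_submatrix_swap, det_submatrix_equiv_self] at this

theorem eq_of_mulVec_eq_of_apply_zero_eq {k : ℕ} (B : Matrix (Fin k) (Fin (k + 1)) R)
    (hB : IsUnit (B.submatrix id Fin.succ).det) {x y : Fin (k + 1) → R}
    (hxy : B *ᵥ x = B *ᵥ y) (h₀ : x 0 = y 0) : x = y := by
  have hsplit : ∀ z : Fin (k + 1) → R,
      B *ᵥ z = fun i => B i 0 * z 0 + (B.submatrix id Fin.succ *ᵥ (z ∘ Fin.succ)) i := by
    intro z; ext i; simp [mulVec, dotProduct, Fin.sum_univ_succ]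
  have htail : x ∘ Fin.succ = y ∘ Fin.succ := by
    refine mulVec_injective_of_isUnit ((isUnit_iff_isUnit_det _).mpr hB) ?_
    ext i
    simpa [hsplit, h₀] using congrFun hxy i
  ext i
  cases i using Fin.cases with
  | zero => exact h₀
  | succ i => exact congrFun htail i

theorem mul_adjugate_apply_eq_zero {ι : Type*} [Fintype ι] [DecidableEq ι]
    (A : Matrix ι ι R) {i j : ι} (h : i ≠ j ∨ A.det = 0) : (A * adjugate A) i j = 0 := by
  rw [mul_adjugate]
  rcases h with h | h <;> simp [h]

end Matrix

def hankel {R : Type*} (a : ℤ → R) (k : ℕ) (n : ℤ) : Matrix (Fin k) (Fin k) R :=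
  Matrix.of fun i j => a (n + i + j)

section Hankel

variable {R : Type*} {a : ℤ → R} {k : ℕ} {n : ℤ}

@[simp]
theorem hankel_apply (i j : Fin k) : hankel a k n i j = a (n + i + j) := rfl

@[simp]
theorem hankel_submatrix_castSucc_castSucc :
    (hankel a (k + 1) n).submatrix Fin.castSucc Fin.castSucc = hankel a k n := rfl

@[simp]
theorem hankel_submatrix_castSucc_succ :
    (hankel a (k + 1) n).submatrix Fin.castSucc Fin.succ = hankel a k (n + 1) := by
  ext i j
  simp only [submatrix_apply, hankel_apply, Fin.val_castSucc, Fin.val_succ]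
  push_cast; ring_nf

@[simp]
theorem hankel_submatrix_succ_castSucc :
    (hankel a (k + 1) n).submatrix Fin.succ Fin.castSucc = hankel a k (n + 1) := by
  ext i j
  simp only [submatrix_apply, hankel_apply, Fin.val_castSucc, Fin.val_succ]
  push_cast; ring_nf

@[simp]
theorem hankel_submatrix_succ_succ :
    (hankel a (k + 1) n).submatrix Fin.succ Fin.succ = hankel a k (n + 2) := by
  ext i j
  simp only [submatrix_apply, hankel_apply, Fin.val_succ]
  push_cast; ring_nf

theorem hankel_submatrix_succ_id :
    (hankel a (k + 1) n).submatrix Fin.succ id =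
      (hankel a (k + 1) (n + 1)).submatrix Fin.castSucc id := by
  ext i j
  simp only [submatrix_apply, hankel_apply, Fin.val_castSucc, Fin.val_succ, id]
  push_cast; ring_nf

variable [CommRing R]

theorem det_hankel_mul_det_hankel (h : IsUnit (hankel a k (n + 2)).det) :
    (hankel a (k + 2) n).det * (hankel a k (n + 2)).det =
      (hankel a (k + 1) n).det * (hankel a (k + 1) (n + 2)).det -
        (hankel a (k + 1) (n + 1)).det ^ 2 := by
  have := desnanot_jacobi (hankel a (k + 2) n)
  simp only [hankel_submatrix_castSucc_castSucc, hankel_submatrix_castSucc_succ,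
    hankel_submatrix_succ_castSucc, hankel_submatrix_succ_succ] at this
  rw [this h, sq]

theorem det_hankel_eq_zero_of_forall_det_hankel_eq {c : R}
    (hc : ∀ n, (hankel a (k + 1) n).det = c) (h : IsUnit (hankel a k (n + 2)).det) :
    (hankel a (k + 2) n).det = 0 := by
  have := det_hankel_mul_det_hankel h
  rwa [hc, hc, hc, sq, sub_self, h.mul_left_eq_zero] at this

end Hankel

theorem det_hankel_of_qSystem {K : Type*} [Field K] {r : ℕ} {R : ℕ → ℤ → K}
    (hne : ∀ α, α ≤ r → ∀ n, R α n ≠ 0) (hbd0 : ∀ n, R 0 n = 1)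
    (hQ : ∀ α, 1 ≤ α → α ≤ r → ∀ n : ℤ,
      R α (n + 1) * R α (n - 1) = R α n ^ 2 + R (α + 1) n * R (α - 1) n) :
    ∀ α, α ≤ r + 1 → ∀ n, (hankel (R 1) α n).det = R α (n + α - 1) := by
  refine Nat.twoStepInduction ?_ ?_ fun k ih₀ ih₁ hk n => ?_
  · simp [hbd0]
  · simp [hankel]
  have hdet := ih₀ (by omega) (n + 2)
  have hdet₁ := ih₁ (by omega)
  rw [show n + 2 + k - 1 = n + k + 1 by ring] at hdet
  have hne₀ := hne k (by omega) (n + k + 1)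
  have hQ₁ := hQ (k + 1) (by omega) (by omega) (n + k + 1)
  have hDJ := det_hankel_mul_det_hankel (a := R 1) (k := k) (n := n) (by simp [hdet, hne₀])
  rw [hdet, hdet₁, hdet₁, hdet₁] at hDJ
  push_cast at hDJ hQ₁ ⊢
  refine mul_right_cancel₀ hne₀ ?_
  rw [hDJ]
  ring_nf at hQ₁ ⊢
  linear_combination hQ₁

section Conserved

variable {R : Type*} [CommRing R] {a : ℤ → R} {r : ℕ}

theorem periodic_adjugate_hankel_apply_last
    (h₁ : ∀ n, (hankel a (r + 1) n).det = 1) (h₀ : ∀ n, (hankel a (r + 2) n).det = 0) :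
    Function.Periodic (fun n j => adjugate (hankel a (r + 2) n) j (Fin.last _)) 1 := by
  intro n
  refine eq_of_mulVec_eq_of_apply_zero_eq ((hankel a (r + 2) (n + 1)).submatrix Fin.castSucc id)
    ?_ ?_ ?_
  · simp [h₁]
  · ext i
    trans (0 : R)
    · exact mul_adjugate_apply_eq_zero (hankel a (r + 2) (n + 1))
        (.inl (Fin.castSucc_lt_last i).ne)
    · rw [← hankel_submatrix_succ_id]
      exact (mul_adjugate_apply_eq_zero (hankel a (r + 2) n) (.inr (h₀ n))).symm
  · simp [adjugate_fin_succ_eq_det_submatrix, h₁]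

theorem det_hankel_submatrix_castSucc_succAbove_eq
    (h₁ : ∀ n, (hankel a (r + 1) n).det = 1) (h₀ : ∀ n, (hankel a (r + 2) n).det = 0)
    (j : Fin (r + 2)) (n n' : ℤ) :
    ((hankel a (r + 2) n).submatrix Fin.castSucc j.succAbove).det =
      ((hankel a (r + 2) n').submatrix Fin.castSucc j.succAbove).det := by
  have hconst : ∀ n, adjugate (hankel a (r + 2) n) j (Fin.last _) =
      adjugate (hankel a (r + 2) 0) j (Fin.last _) := fun n => by
    simpa using congrFun ((periodic_adjugate_hankel_apply_last h₁ h₀).int_mul_eq n) j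
  have := (hconst n).trans (hconst n').symm
  rw [adjugate_fin_succ_eq_det_submatrix, adjugate_fin_succ_eq_det_submatrix,
    Fin.succAbove_last] at this
  exact (isUnit_neg_one.pow _).mul_left_cancel this

theorem sum_neg_one_pow_mul_det_hankel_submatrix_mul_eq_zero
    (h₁ : ∀ n, (hankel a (r + 1) n).det = 1) (h₀ : ∀ n, (hankel a (r + 2) n).det = 0)
    (n n' : ℤ) :
    ∑ j : Fin (r + 2), (-1) ^ (j : ℕ) *
      ((hankel a (r + 2) n').submatrix Fin.castSucc j.succAbove).det * a (n + j) = 0 := by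
  have := mul_adjugate_apply_eq_zero (hankel a (r + 2) n) (i := 0) (j := Fin.last _)
    (.inl Fin.last_pos.ne)
  simp only [mul_apply, adjugate_fin_succ_eq_det_submatrix, Fin.succAbove_last, hankel_apply,
    Fin.val_zero, Nat.cast_zero, add_zero, Fin.val_last] at this
  rw [← neg_one_pow_mul_eq_zero_iff (n := r + 1), Finset.mul_sum, ← this]
  refine Finset.sum_congr rfl fun j _ => ?_
  rw [det_hankel_submatrix_castSucc_succAbove_eq h₁ h₀ j n' n]
  ring

end Conserved

theorem qsystem_conserved_quantities_general (r : ℕ) (R : ℕ → ℤ → ℝ)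
    (hpos : ∀ α, α ≤ r + 1 → ∀ n : ℤ, 0 < R α n)
    (hbd0 : ∀ n : ℤ, R 0 n = 1) (hbd1 : ∀ n : ℤ, R (r + 1) n = 1)
    (hQ : ∀ α, 1 ≤ α → α ≤ r → ∀ n : ℤ,
      R α (n + 1) * R α (n - 1) = R α n ^ 2 + R (α + 1) n * R (α - 1) n)
    (D : ℕ → ℤ → ℝ)
    (hD : ∀ (m : ℕ) (n : ℤ), D m n = Matrix.det (Matrix.of fun i c : Fin (r + 1) =>
      R 1 (n + (((i : ℕ) + 1 : ℕ) : ℤ) +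
        (if (c : ℕ) + 1 < r + 2 - m then (((c : ℕ) + 1 : ℕ) : ℤ)
          else (((c : ℕ) + 2 : ℕ) : ℤ)) - 2))) :
    (∀ m, m ≤ r + 1 → ∀ n n' : ℤ, D m n = D m n') ∧
    (∀ n : ℤ, D 0 n = 1) ∧ (∀ n : ℤ, D (r + 1) n = 1) ∧
    (∀ n : ℤ, ∑ m ∈ Finset.range (r + 2),
      (-1 : ℝ) ^ m * D (r + 1 - m) 0 * R 1 (n + (m : ℤ)) = 0) := by
  have hdet := det_hankel_of_qSystem (fun α hα n => (hpos α (by omega) n).ne') hbd0 hQ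
  have h₁ : ∀ n, (hankel (R 1) (r + 1) n).det = 1 := fun n => (hdet _ le_rfl n).trans (hbd1 _)
  have h₀ : ∀ n, (hankel (R 1) (r + 2) n).det = 0 := fun n =>
    det_hankel_eq_zero_of_forall_det_hankel_eq h₁
      (by rw [hdet r (by omega)]; exact (hpos r (by omega) _).ne'.isUnit)
  have hminor : ∀ (j : Fin (r + 2)) n,
      D (r + 1 - j) n = ((hankel (R 1) (r + 2) n).submatrix Fin.castSucc j.succAbove).det := by
    intro j n
    rw [hD]
    congr 1
    ext i c
    have hcond : (c : ℕ) + 1 < r + 2 - (r + 1 - j) ↔ (c : ℕ) < j := by omega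
    simp only [of_apply, submatrix_apply, hankel_apply, Fin.succAbove, Fin.lt_def,
      Fin.val_castSucc, hcond]
    split_ifs <;> push_cast [Fin.val_succ, Fin.val_castSucc] <;> ring_nf
  refine ⟨fun m hm n n' => ?_, fun n => ?_, fun n => ?_, fun n => ?_⟩
  · obtain ⟨j, rfl⟩ : ∃ j : Fin (r + 2), r + 1 - j = m :=
      ⟨⟨r + 1 - m, by omega⟩, Nat.sub_sub_self hm⟩
    rw [hminor, hminor, det_hankel_submatrix_castSucc_succAbove_eq h₁ h₀]
  · simpa [h₁] using hminor (Fin.last _) n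
  · simpa [h₁] using hminor 0 n
  · rw [← Fin.sum_univ_eq_sum_range (fun m => (-1 : ℝ) ^ m * D (r + 1 - m) 0 * R 1 (n + m))]
    simp only [hminor]
    exact sum_neg_one_pow_mul_det_hankel_submatrix_mul_eq_zero h₁ h₀ n 0

/-- the conserved quantities D_m(n) of the A_r Q-system.
D_m(n) is the determinant of the (r+1)×(r+1) matrix with rows i = 1,…,r+1,
columns the elements j of {1,…,r+2}\{r+2−m} in increasing order (the c-th
column, 1 ≤ c ≤ r+1, is j = c if c < r+2−m and j = c+1 otherwise), and
(i,j) entry R_{1, n+i+j−2}.  Then D_m(n) is independent of n,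
D_0 = D_{r+1} = 1, and Σ_{m=0}^{r+1} (−1)^m D_{r+1−m}(0) R_{1,n+m} = 0. -/
theorem qsystem_conserved_quantities (r : ℕ) (hr : 1 ≤ r) (R : ℕ → ℤ → ℝ)
    (hpos : ∀ α, α ≤ r + 1 → ∀ n : ℤ, 0 < R α n)
    (hbd0 : ∀ n : ℤ, R 0 n = 1) (hbd1 : ∀ n : ℤ, R (r + 1) n = 1)
    (hQ : ∀ α, 1 ≤ α → α ≤ r → ∀ n : ℤ,
      R α (n + 1) * R α (n - 1) = R α n ^ 2 + R (α + 1) n * R (α - 1) n)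
    (D : ℕ → ℤ → ℝ)
    (hD : ∀ (m : ℕ) (n : ℤ), D m n = Matrix.det (Matrix.of fun i c : Fin (r + 1) =>
      R 1 (n + (((i : ℕ) + 1 : ℕ) : ℤ) +
        (if (c : ℕ) + 1 < r + 2 - m then (((c : ℕ) + 1 : ℕ) : ℤ)
          else (((c : ℕ) + 2 : ℕ) : ℤ)) - 2))) :
    (∀ m, m ≤ r + 1 → ∀ n n' : ℤ, D m n = D m n') ∧
    (∀ n : ℤ, D 0 n = 1) ∧ (∀ n : ℤ, D (r + 1) n = 1) ∧
    (∀ n : ℤ, ∑ m ∈ Finset.range (r + 2),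
      (-1 : ℝ) ^ m * D (r + 1 - m) 0 * R 1 (n + (m : ℤ)) = 0) :=
  qsystem_conserved_quantities_general r R hpos hbd0 hbd1 hQ D hD
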